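/- arXiv:math/9912213 — 4 statements merged into one kernel-verified Lean document; each statement's English description precedes it below -/
import Mathlib

section
/- Let σ be a facet of the cone ℚ_{≥0}A with primitive integral support function F_σ. Then E_σ(β) := {λ ∈ k(A∩σ)/ℤ(A∩σ) : β - λ ∈ ℕA + ℤ(A∩σ)} is nonempty if and only if F_σ(β) ∈ F_σ(ℕA). -/
open scoped BigOperators

/-- Cast an integer vector to a vector over `k`. -/
def castVec (k : Type*) [Field k] {d : ℕ} (v : Fin d → ℤ) : Fin d → k :=
  fun i => (v i : k)

/-- Cast an integer vector to a rational vector. -/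
def castQVec {d : ℕ} (v : Fin d → ℤ) : Fin d → ℚ := fun i => (v i : ℚ)

/-- The `j`-th column of `A` viewed over `ℚ`. -/
def aQ {d n : ℕ} (a : Fin n → Fin d → ℤ) (j : Fin n) : Fin d → ℚ := fun i => (a j i : ℚ)

/-- The monoid `ℕA` inside `k^d`. -/
def NAk (k : Type*) [Field k] {d n : ℕ} (a : Fin n → Fin d → ℤ) : AddSubmonoid (Fin d → k) :=
  AddSubmonoid.closure (Set.range fun j => castVec k (a j))

/-- The group `ℤ(A∩τ)` inside `k^d`. -/
def Zk (k : Type*) [Field k] {d n : ℕ} (a : Fin n → Fin d → ℤ) (τ : Set (Fin n)) :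
    AddSubgroup (Fin d → k) :=
  AddSubgroup.closure ((fun j => castVec k (a j)) '' τ)

/-- The `k`-linear span `k(A∩τ)` inside `k^d`. -/
def kspan (k : Type*) [Field k] {d n : ℕ} (a : Fin n → Fin d → ℤ) (τ : Set (Fin n)) :
    Submodule k (Fin d → k) :=
  Submodule.span k ((fun j => castVec k (a j)) '' τ)

/-- The set `E_τ(β) = {λ ∈ k(A∩τ)/ℤ(A∩τ) : β - λ ∈ ℕA + ℤ(A∩τ)}`,
realized inside the quotient of `k^d` by `ℤ(A∩τ)`. -/
def Eface (k : Type*) [Field k] {d n : ℕ} (a : Fin n → Fin d → ℤ) (τ : Set (Fin n))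
    (β : Fin d → k) : Set ((Fin d → k) ⧸ Zk k a τ) :=
  { x | ∃ lam : Fin d → k, lam ∈ kspan k a τ ∧ QuotientAddGroup.mk lam = x ∧
      ∃ m ∈ NAk k a, ∃ z ∈ Zk k a τ, β - lam = m + z }

/-- The monoid `ℕA` inside `ℤ^d`. -/
def NAint {d n : ℕ} (a : Fin n → Fin d → ℤ) : AddSubmonoid (Fin d → ℤ) :=
  AddSubmonoid.closure (Set.range a)

/-- The group `ℤ(A∩τ)` inside `ℤ^d`. -/
def Zint {d n : ℕ} (a : Fin n → Fin d → ℤ) (τ : Set (Fin n)) : AddSubgroup (Fin d → ℤ) :=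
  AddSubgroup.closure (a '' τ)

/-- A face of the cone `ℚ_{≥0}A`: the zero set on `A` of a supporting linear functional. -/
def IsFace {d n : ℕ} (a : Fin n → Fin d → ℤ) (τ : Set (Fin n)) : Prop :=
  ∃ F : (Fin d → ℚ) →ₗ[ℚ] ℚ, (∀ j, 0 ≤ F (aQ a j)) ∧ τ = {j | F (aQ a j) = 0}

/-- Integer dot product. -/
def dotZ {d : ℕ} (c v : Fin d → ℤ) : ℤ := ∑ i, c i * v i

/-- The `k`-linear extension of the linear form with integral coefficient vector `c`. -/
def dotK (k : Type*) [Field k] {d : ℕ} (c : Fin d → ℤ) (β : Fin d → k) : k :=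
  ∑ i, (c i : k) * β i

/-- `c` is the coefficient vector of the primitive integral support function of the facet `σ`:
nonnegative on the columns, vanishing exactly on the columns in `σ`, and with value group `ℤ`
on `ℤA`. -/
def IsPrimSupp {d n : ℕ} (a : Fin n → Fin d → ℤ) (σ : Set (Fin n)) (c : Fin d → ℤ) : Prop :=
  (∀ j, 0 ≤ dotZ c (a j)) ∧ (∀ j, dotZ c (a j) = 0 ↔ j ∈ σ) ∧
  (∃ u : Fin n → ℤ, ∑ j, u j * dotZ c (a j) = 1)

/-- A facet: a face of dimension `d-1`. -/
def IsFacet {d n : ℕ} (a : Fin n → Fin d → ℤ) (σ : Set (Fin n)) : Prop :=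
  IsFace a σ ∧ Module.finrank ℚ (Submodule.span ℚ (aQ a '' σ)) = d - 1

/-- All columns of `A` lie on a common affine hyperplane off the origin. -/
def OnHyperplane {d n : ℕ} (a : Fin n → Fin d → ℤ) : Prop :=
  ∃ h : Fin d → ℚ, ∀ j, ∑ i, h i * (a j i : ℚ) = 1

/-- The matrix `A` has rank `d`. -/
def FullRank {d n : ℕ} (a : Fin n → Fin d → ℤ) : Prop :=
  Submodule.span ℚ (Set.range (aQ a)) = ⊤

/-- The rational cone `ℚ_{≥0}A`. -/
def coneQ {d n : ℕ} (a : Fin n → Fin d → ℤ) : Set (Fin d → ℚ) :=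
  {x | ∃ c : Fin n → ℚ, (∀ j, 0 ≤ c j) ∧ x = ∑ j, c j • aQ a j}

/-- Normality of the semigroup: `ℕA = ℤA ∩ ℚ_{≥0}A`. -/
def IsNormal {d n : ℕ} (a : Fin n → Fin d → ℤ) : Prop :=
  ∀ v : Fin d → ℤ, v ∈ Zint a Set.univ → castQVec v ∈ coneQ a → v ∈ NAint a

/-- Coordinatewise cast `ℤ^d → ℚ^d` as an additive monoid homomorphism. -/
def castQhom (d : ℕ) : (Fin d → ℤ) →+ (Fin d → ℚ) where
  toFun v := fun i => (v i : ℚ)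
  map_zero' := by funext i; simp
  map_add' u v := by funext i; simp

/-- The lattice `(ℚ(A∩τ)) ∩ ℤA` inside `ℤ^d`. -/
def latticeQτ {d n : ℕ} (a : Fin n → Fin d → ℤ) (τ : Set (Fin n)) :
    AddSubgroup (Fin d → ℤ) :=
  Zint a Set.univ ⊓
    AddSubgroup.comap (castQhom d) (Submodule.span ℚ (aQ a '' τ)).toAddSubgroup

/-! The form `F_σ` vanishes on `k(A∩σ) ⊇ ℤ(A∩σ)`, which gives one direction. Conversely,
`k(A∩σ)` is the whole kernel of `F_σ` on `k^d`: over `ℚ` the span of `A∩σ` is a hyperplane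
inside `ker F_σ`, hence equal to it, and since `F_σ` has rational coefficients its kernel over
`k` is spanned by its kernel over `ℚ`. So if `F_σ(β) = F_σ(v)` with `v ∈ ℕA`, then
`λ := β - v` lies in `k(A∩σ)` and `β - λ = v ∈ ℕA`. -/

section IntegralLinearForm

variable {K : Type*} [Field K] {d n : ℕ}

variable (K) in
def intForm (c : Fin d → ℤ) : (Fin d → K) →ₗ[K] K where
  toFun := dotK K c
  map_add' x y := by simp only [dotK, Pi.add_apply, mul_add, Finset.sum_add_distrib]
  map_smul' r x := by simp only [dotK, Pi.smul_apply, smul_eq_mul, Finset.mul_sum, mul_left_comm,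
    RingHom.id_apply]

lemma intForm_apply (c : Fin d → ℤ) (x : Fin d → K) : intForm K c x = ∑ i, (c i : K) * x i :=
  rfl

lemma intForm_castVec (c v : Fin d → ℤ) : intForm K c (castVec K v) = dotZ c v := by
  simp [intForm_apply, castVec, dotZ]

lemma intForm_ne_zero [CharZero K] {c : Fin d → ℤ} (hc : c ≠ 0) : intForm K c ≠ 0 := by
  obtain ⟨i, hi⟩ := Function.ne_iff.mp hc
  intro h
  exact hi (by simpa [intForm_apply, Pi.single_apply] using LinearMap.congr_fun h (Pi.single i 1))

lemma finrank_ker_intForm [CharZero K] {c : Fin d → ℤ} (hc : c ≠ 0) :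
    Module.finrank K (LinearMap.ker (intForm K c)) = d - 1 := by
  have := Module.Dual.finrank_ker_add_one_of_ne_zero (intForm_ne_zero (K := K) hc)
  rw [Module.finrank_fin_fun] at this
  omega

lemma kspan_le_ker_intForm {a : Fin n → Fin d → ℤ} {τ : Set (Fin n)} {c : Fin d → ℤ}
    (hτ : ∀ j ∈ τ, dotZ c (a j) = 0) : kspan K a τ ≤ LinearMap.ker (intForm K c) := by
  rw [kspan, Submodule.span_le]
  rintro _ ⟨j, hj, rfl⟩
  simp [intForm_castVec, hτ j hj]

lemma Zk_le_kspan (a : Fin n → Fin d → ℤ) (τ : Set (Fin n)) :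
    Zk K a τ ≤ (kspan K a τ).toAddSubgroup :=
  AddSubgroup.closure_le _ |>.mpr Submodule.subset_span

lemma mem_NAk_iff {a : Fin n → Fin d → ℤ} {m : Fin d → K} :
    m ∈ NAk K a ↔ ∃ v ∈ NAint a, castVec K v = m := by
  have : NAk K a = (NAint a).map ((Int.castAddHom K).compLeft (Fin d)) := by
    rw [NAk, NAint, AddMonoidHom.map_mclosure, ← Set.range_comp]
    rfl
  rw [this]
  rfl

end IntegralLinearForm

section RationalStructure

variable {k : Type*} [Field k] [CharZero k] {d n : ℕ}

variable (k d) in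
def ratCastVec : (Fin d → ℚ) →ₗ[ℚ] (Fin d → k) := (Algebra.linearMap ℚ k).compLeft (Fin d)

lemma ratCastVec_aQ (a : Fin n → Fin d → ℤ) (j : Fin n) :
    ratCastVec k d (aQ a j) = castVec k (a j) := by
  funext i
  simp [ratCastVec, aQ, castVec]

lemma span_image_ratCastVec_span (S : Set (Fin d → ℚ)) :
    Submodule.span k (ratCastVec k d '' Submodule.span ℚ S) =
      Submodule.span k (ratCastVec k d '' S) := by
  refine le_antisymm (Submodule.span_le.mpr ?_)
    (Submodule.span_mono (Set.image_mono Submodule.subset_span))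
  rw [← Submodule.map_coe, Submodule.map_span]
  exact Submodule.span_le_restrictScalars ℚ k _

lemma ker_intForm_le_span_ratCastVec {c : Fin d → ℤ} (hc : c ≠ 0) :
    LinearMap.ker (intForm k c) ≤
      Submodule.span k (ratCastVec k d '' LinearMap.ker (intForm ℚ c)) := by
  obtain ⟨i₀, hi₀⟩ := Function.ne_iff.mp hc
  set u : Fin d → Fin d → ℚ := fun i => Pi.single i 1 - ((c i : ℚ) / c i₀) • Pi.single i₀ 1
  have hu : ∀ i, u i ∈ LinearMap.ker (intForm ℚ c) := by
    intro i
    have : (c i₀ : ℚ) ≠ 0 := by exact_mod_cast hi₀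
    simp [u, intForm_apply, Pi.single_apply, mul_sub, Finset.sum_sub_distrib,
      mul_div_cancel₀ _ this]
  intro x hx
  rw [LinearMap.mem_ker, intForm_apply] at hx
  have hx_eq : x = ∑ i, x i • ratCastVec k d (u i) := by
    have hsum : ∑ i, x i * ((c i : k) / c i₀) = 0 := by
      simp_rw [← mul_div_assoc, ← Finset.sum_div, mul_comm (x _), hx, zero_div]
    funext j
    simp [u, ratCastVec, Finset.sum_apply, Pi.single_apply, mul_sub, Finset.sum_sub_distrib, hsum]
  rw [hx_eq]
  exact Submodule.sum_mem _ fun i _ =>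
    Submodule.smul_mem _ _ (Submodule.subset_span ⟨u i, hu i, rfl⟩)

end RationalStructure

section Facet

variable {k : Type*} [Field k] [CharZero k] {d n : ℕ} {a : Fin n → Fin d → ℤ}
  {σ : Set (Fin n)} {c : Fin d → ℤ}

lemma IsPrimSupp.ne_zero (hsupp : IsPrimSupp a σ c) : c ≠ 0 := by
  rintro rfl
  obtain ⟨-, -, u, hu⟩ := hsupp
  simp [dotZ] at hu

lemma span_aQ_eq_ker_intForm (hdim : Module.finrank ℚ (Submodule.span ℚ (aQ a '' σ)) = d - 1)
    (hσ : ∀ j ∈ σ, dotZ c (a j) = 0) (hc : c ≠ 0) :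
    Submodule.span ℚ (aQ a '' σ) = LinearMap.ker (intForm ℚ c) :=
  Submodule.eq_of_le_of_finrank_eq (kspan_le_ker_intForm (K := ℚ) hσ)
    (by rw [hdim, finrank_ker_intForm hc])

lemma kspan_eq_ker_intForm (hfacet : IsFacet a σ) (hsupp : IsPrimSupp a σ c) :
    kspan k a σ = LinearMap.ker (intForm k c) := by
  have hσ : ∀ j ∈ σ, dotZ c (a j) = 0 := fun j => (hsupp.2.1 j).2
  refine le_antisymm (kspan_le_ker_intForm hσ) ?_
  calc LinearMap.ker (intForm k c)
      ≤ Submodule.span k (ratCastVec k d '' LinearMap.ker (intForm ℚ c)) :=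
        ker_intForm_le_span_ratCastVec hsupp.ne_zero
    _ = Submodule.span k (ratCastVec k d '' (aQ a '' σ)) := by
        rw [← span_aQ_eq_ker_intForm hfacet.2 hσ hsupp.ne_zero, span_image_ratCastVec_span]
    _ = kspan k a σ := by
        simp only [kspan, Set.image_image, ratCastVec_aQ]

end Facet

theorem stmt2_general {d n : ℕ} (a : Fin n → Fin d → ℤ) (k : Type*) [Field k] [CharZero k]
    (σ : Set (Fin n)) (c : Fin d → ℤ)
    (hfacet : IsFacet a σ) (hsupp : IsPrimSupp a σ c) (β : Fin d → k) :
    (Eface k a σ β).Nonempty ↔ ∃ v ∈ NAint a, dotK k c β = ((dotZ c v : ℤ) : k) := by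
  have hker := kspan_eq_ker_intForm (k := k) hfacet hsupp
  change _ ↔ ∃ v ∈ NAint a, intForm k c β = _
  constructor
  · rintro ⟨-, lam, hlam, -, m, hm, z, hz, hβ⟩
    obtain ⟨v, hv, rfl⟩ := mem_NAk_iff.mp hm
    have hz' : z ∈ LinearMap.ker (intForm k c) := hker ▸ Zk_le_kspan a σ hz
    rw [hker, LinearMap.mem_ker] at hlam
    rw [LinearMap.mem_ker] at hz'
    refine ⟨v, hv, ?_⟩
    rw [eq_add_of_sub_eq hβ, map_add, map_add, hz', hlam, intForm_castVec, add_zero, add_zero]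
  · rintro ⟨v, hv, hβ⟩
    have hlam : β - castVec k v ∈ kspan k a σ := by
      rw [hker, LinearMap.mem_ker, map_sub, hβ, intForm_castVec, sub_self]
    exact ⟨_, _, hlam, rfl, _, mem_NAk_iff.mpr ⟨v, hv, rfl⟩, 0, zero_mem _, by
      rw [sub_sub_cancel, add_zero]⟩

/-- For a facet `σ` with primitive integral support function `F_σ` (coefficient
vector `c`), `E_σ(β)` is nonempty iff `F_σ(β) ∈ F_σ(ℕA)`. -/
theorem stmt2 {d n : ℕ} (a : Fin n → Fin d → ℤ) (k : Type*) [Field k] [CharZero k]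
    (hA : OnHyperplane a) (hrank : FullRank a)
    (σ : Set (Fin n)) (c : Fin d → ℤ)
    (hfacet : IsFacet a σ) (hsupp : IsPrimSupp a σ c) (β : Fin d → k) :
    (Eface k a σ β).Nonempty ↔ ∃ v ∈ NAint a, dotK k c β = ((dotZ c v : ℤ) : k) :=
  stmt2_general a k σ c hfacet hsupp β
end

section
/- For any face τ of the cone ℚ_{≥0}A, the cardinality of E_τ(β) is at most the index [(ℚ(A∩τ)) ∩ ℤA : ℤ(A∩τ)]; in particular, if any two elements λ, λ' of E_τ(β) have difference λ - λ' lying in (k(A∩τ)) ∩ ℤA, and (k(A∩τ)) ∩ ℤA = (ℚ(A∩τ)) ∩ ℤA, then distinct elements of E_τ(β) map to distinct classes in ((ℚ(A∩τ)) ∩ ℤA)/ℤ(A∩τ). -/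
open scoped BigOperators

/-!
Representatives `λ, λ'` of two elements of `E_τ(β)` differ by an element of `ℤA`, because
`β - λ` and `β - λ'` both lie in `ℕA + ℤ(A∩τ) ⊆ ℤA`. Since `λ - λ'` also lies in `k(A∩τ)`, and
membership of a rational vector in a span of rational vectors does not change under extension
of scalars, `λ - λ'` lies in `ℚ(A∩τ) ∩ ℤA`. Fixing `λ₀`, the map `λ ↦ λ - λ₀` therefore embeds
`E_τ(β)` into `(ℚ(A∩τ) ∩ ℤA)/ℤ(A∩τ)`, which is finitely generated and torsion, hence finite.
-/

-- A `K`-functional separating `x` from `span K S` is a row vector, so it extends to `L`.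
theorem mem_span_of_algebraMap_comp_mem_span {K L ι : Type*} [Field K] [Field L] [Algebra K L]
    [Fintype ι] {S : Set (ι → K)} {x : ι → K}
    (hx : algebraMap K L ∘ x ∈ Submodule.span L ((algebraMap K L ∘ ·) '' S)) :
    x ∈ Submodule.span K S := by
  classical
  by_contra h
  obtain ⟨f, hfx, hfS⟩ := Submodule.exists_dual_map_eq_bot_of_notMem h inferInstance
  set c : ι → K := fun i => f fun j => if i = j then 1 else 0
  have hf : ∀ y, f y = c ⬝ᵥ y := fun y => by
    simp [dotProduct, c, LinearMap.pi_apply_eq_sum_univ f y, mul_comm]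
  have hspan : Submodule.span L ((algebraMap K L ∘ ·) '' S) ≤
      LinearMap.ker (dotProductBilin L L (algebraMap K L ∘ c)) := by
    rw [Submodule.span_le]
    rintro _ ⟨y, hy, rfl⟩
    have : f y ∈ (⊥ : Submodule K K) := hfS ▸ Submodule.mem_map_of_mem (Submodule.subset_span hy)
    rw [Submodule.mem_bot, hf] at this
    simp [← RingHom.map_dotProduct, this]
  rw [hf] at hfx
  exact hfx (by simpa [← RingHom.map_dotProduct] using hspan hx)

theorem exists_nsmul_mem_of_mem_span_rat {V : Type*} [AddCommGroup V] [Module ℚ V]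
    (M : AddSubgroup V) {x : V} (hx : x ∈ Submodule.span ℚ (M : Set V)) :
    ∃ N : ℕ, 0 < N ∧ N • x ∈ M := by
  induction hx using Submodule.span_induction with
  | mem y hy => exact ⟨1, one_pos, by simpa using hy⟩
  | zero => exact ⟨1, one_pos, by simp⟩
  | add y z _ _ hy hz =>
    obtain ⟨N₁, hN₁, hy⟩ := hy
    obtain ⟨N₂, hN₂, hz⟩ := hz
    refine ⟨N₁ * N₂, Nat.mul_pos hN₁ hN₂, ?_⟩
    have : (N₁ * N₂) • (y + z) = N₂ • N₁ • y + N₁ • N₂ • z := by module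
    rw [this]
    exact add_mem (nsmul_mem hy _) (nsmul_mem hz _)
  | smul q y _ hy =>
    obtain ⟨N, hN, hy⟩ := hy
    refine ⟨q.den * N, Nat.mul_pos q.pos hN, ?_⟩
    have : (q.den * N) • q • y = q.num • N • y := by
      rw [← Nat.cast_smul_eq_nsmul ℚ, ← Nat.cast_smul_eq_nsmul ℚ N, ← Int.cast_smul_eq_zsmul ℚ,
        smul_smul, smul_smul, ← q.den_mul_eq_num]
      push_cast
      ring_nf
    rw [this]
    exact zsmul_mem hy _

theorem castQhom_injective (d : ℕ) : Function.Injective (castQhom d) := fun _ _ h =>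
  funext fun i => Int.cast_injective (α := ℚ) (congrFun h i)

section

variable {d n : ℕ} (a : Fin n → Fin d → ℤ) (k : Type*) [Field k]

def castKhom : (Fin d → ℤ) →+ (Fin d → k) where
  toFun v := castVec k v
  map_zero' := by funext i; simp [castVec]
  map_add' u v := by funext i; simp [castVec]

theorem Zk_eq_map (τ : Set (Fin n)) : Zk k a τ = (Zint a τ).map (castKhom k) := by
  rw [Zint, AddMonoidHom.map_closure, Set.image_image]
  rfl

theorem NAk_le_Zk_univ : NAk k a ≤ (Zk k a Set.univ).toAddSubmonoid := by
  rw [NAk, AddSubmonoid.closure_le]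
  rintro _ ⟨j, rfl⟩
  exact AddSubgroup.subset_closure ⟨j, Set.mem_univ j, rfl⟩

theorem sub_mem_Zk_univ {τ : Set (Fin n)} {β lam lam' : Fin d → k}
    (h : ∃ m ∈ NAk k a, ∃ z ∈ Zk k a τ, β - lam = m + z)
    (h' : ∃ m ∈ NAk k a, ∃ z ∈ Zk k a τ, β - lam' = m + z) :
    lam - lam' ∈ Zk k a Set.univ := by
  obtain ⟨m, hm, z, hz, he⟩ := h
  obtain ⟨m', hm', z', hz', he'⟩ := h'
  have hZ : Zk k a τ ≤ Zk k a Set.univ :=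
    AddSubgroup.closure_mono (Set.image_mono (Set.subset_univ τ))
  have : lam - lam' = (m' + z') - (m + z) := by rw [← he, ← he']; abel
  rw [this]
  exact sub_mem (add_mem (NAk_le_Zk_univ a k hm') (hZ hz'))
    (add_mem (NAk_le_Zk_univ a k hm) (hZ hz))

theorem castQVec_mem_span_of_castVec_mem_kspan [CharZero k] {τ : Set (Fin n)} {v : Fin d → ℤ}
    (hv : castVec k v ∈ kspan k a τ) : castQVec v ∈ Submodule.span ℚ (aQ a '' τ) := by
  have hcast : ∀ w : Fin d → ℤ, castVec k w = algebraMap ℚ k ∘ castQVec w := fun w => by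
    funext i; simp [castVec, castQVec]
  have himage : (fun j => castVec k (a j)) '' τ = (algebraMap ℚ k ∘ ·) '' (aQ a '' τ) := by
    rw [Set.image_image]
    exact Set.image_congr fun j _ => hcast (a j)
  rw [kspan, himage, hcast] at hv
  exact mem_span_of_algebraMap_comp_mem_span hv

theorem span_aQ_le_span_Zint (τ : Set (Fin n)) :
    Submodule.span ℚ (aQ a '' τ) ≤ Submodule.span ℚ ((Zint a τ).map (castQhom d) : Set _) := by
  refine Submodule.span_mono ?_
  rintro _ ⟨j, hj, rfl⟩
  exact ⟨a j, AddSubgroup.subset_closure ⟨j, hj, rfl⟩, rfl⟩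

theorem isAddTorsion_quotient_latticeQτ (τ : Set (Fin n)) :
    IsAddTorsion (latticeQτ a τ ⧸ (Zint a τ).addSubgroupOf (latticeQτ a τ)) := by
  intro q
  induction q using QuotientAddGroup.induction_on with
  | H l =>
    obtain ⟨N, hN, w, hw, hwN⟩ :=
      exists_nsmul_mem_of_mem_span_rat _ (span_aQ_le_span_Zint a τ l.2.2)
    have hNl : N • l.1 = w := castQhom_injective d (by rw [hwN, map_nsmul])
    refine isOfFinAddOrder_iff_nsmul_eq_zero.mpr ⟨N, hN, ?_⟩
    rw [← QuotientAddGroup.mk_nsmul, QuotientAddGroup.eq_zero_iff,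
      AddSubgroup.mem_addSubgroupOf, AddSubgroup.coe_nsmul, hNl]
    exact hw

theorem finite_quotient_latticeQτ (τ : Set (Fin n)) :
    Finite (latticeQτ a τ ⧸ (Zint a τ).addSubgroupOf (latticeQτ a τ)) :=
  have : AddGroup.FG (latticeQτ a τ) := Module.Finite.iff_addGroup_fg.mp
    (inferInstanceAs (Module.Finite ℤ (latticeQτ a τ).toIntSubmodule))
  AddCommGroup.finite_of_fg_isAddTorsion _ (isAddTorsion_quotient_latticeQτ a τ)

def quotientCastHom (τ : Set (Fin n)) :
    latticeQτ a τ ⧸ (Zint a τ).addSubgroupOf (latticeQτ a τ) →+ (Fin d → k) ⧸ Zk k a τ :=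
  QuotientAddGroup.map _ _ ((castKhom k).comp (latticeQτ a τ).subtype) fun u hu => by
    rw [Zk_eq_map]
    exact AddSubgroup.mem_map_of_mem _ (AddSubgroup.mem_addSubgroupOf.mp hu)

theorem Eface_subset_range [CharZero k] {τ : Set (Fin n)} {β : Fin d → k}
    {x₀ : (Fin d → k) ⧸ Zk k a τ} (hx₀ : x₀ ∈ Eface k a τ β) :
    Eface k a τ β ⊆ Set.range fun q => x₀ + quotientCastHom a k τ q := by
  rintro _ ⟨lam, hlam, rfl, hex⟩
  obtain ⟨lam₀, hlam₀, rfl, hex₀⟩ := hx₀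
  obtain ⟨u, hu, hu_eq⟩ : ∃ u ∈ Zint a Set.univ, castKhom k u = lam - lam₀ := by
    rw [← AddSubgroup.mem_map, ← Zk_eq_map]
    exact sub_mem_Zk_univ a k hex hex₀
  have hspan : castQVec u ∈ Submodule.span ℚ (aQ a '' τ) := by
    refine castQVec_mem_span_of_castVec_mem_kspan a k ?_
    rw [show castVec k u = lam - lam₀ from hu_eq]
    exact sub_mem hlam hlam₀
  refine ⟨QuotientAddGroup.mk ⟨u, hu, hspan⟩, ?_⟩
  change QuotientAddGroup.mk lam₀ + QuotientAddGroup.mk (castKhom k u) = _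
  rw [hu_eq, ← QuotientAddGroup.mk_add, add_sub_cancel]

end

theorem stmt5_general {d n : ℕ} (a : Fin n → Fin d → ℤ) (k : Type*) [Field k] [CharZero k]
    (τ : Set (Fin n)) (β : Fin d → k) :
    (Eface k a τ β).ncard ≤ (Zint a τ).relIndex (latticeQτ a τ) ∧
    (∀ lam lam' : Fin d → k, lam ∈ kspan k a τ → lam' ∈ kspan k a τ →
      (∃ m ∈ NAk k a, ∃ z ∈ Zk k a τ, β - lam = m + z) →
      (∃ m ∈ NAk k a, ∃ z ∈ Zk k a τ, β - lam' = m + z) →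
      lam - lam' ∈ Zk k a Set.univ) := by
  refine ⟨?_, fun lam lam' _ _ h h' => sub_mem_Zk_univ a k h h'⟩
  rcases (Eface k a τ β).eq_empty_or_nonempty with hE | ⟨x₀, hx₀⟩
  · simp [hE]
  have := finite_quotient_latticeQτ a τ
  calc (Eface k a τ β).ncard
      ≤ (Set.range fun q => x₀ + quotientCastHom a k τ q).ncard :=
        Set.ncard_le_ncard (Eface_subset_range a k hx₀) (Set.finite_range _)
    _ ≤ Nat.card (latticeQτ a τ ⧸ (Zint a τ).addSubgroupOf (latticeQτ a τ)) := by
        rw [← Nat.card_coe_set_eq]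
        exact Finite.card_range_le _
    _ = (Zint a τ).relIndex (latticeQτ a τ) := rfl

/-- `|E_τ(β)| ≤ [(ℚ(A∩τ)) ∩ ℤA : ℤ(A∩τ)]`; moreover the difference of (the
representatives of) any two elements of `E_τ(β)` lies in `(k(A∩τ)) ∩ ℤA`. -/
theorem stmt5 {d n : ℕ} (a : Fin n → Fin d → ℤ) (k : Type*) [Field k] [CharZero k]
    (τ : Set (Fin n)) (hτ : IsFace a τ) (β : Fin d → k) :
    (Eface k a τ β).ncard ≤ (Zint a τ).relIndex (latticeQτ a τ) ∧
    (∀ lam lam' : Fin d → k, lam ∈ kspan k a τ → lam' ∈ kspan k a τ →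
      (∃ m ∈ NAk k a, ∃ z ∈ Zk k a τ, β - lam = m + z) →
      (∃ m ∈ NAk k a, ∃ z ∈ Zk k a τ, β - lam' = m + z) →
      lam - lam' ∈ Zk k a Set.univ) :=
  stmt5_general a k τ β
end

section
/- Assume the semigroup ℕA is normal, i.e., ℕA = ℤA ∩ ℚ_{≥0}A. Then for every face τ of the cone ℚ_{≥0}A, one has (ℚ(A∩τ)) ∩ ℤA = ℤ(A∩τ). -/
open scoped BigOperators

/-!
A vector `v ∈ ℤA` in the span of `A ∩ τ` becomes a nonnegative combination of `A ∩ τ`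
after adding `N` times the sum of these columns, for `N` large. Normality puts the shifted
vector in `ℕA`, and a support functional of `τ` vanishes on it; since the functional is
nonnegative on every column, only columns of `τ` can occur in a representation in `ℕA`.
Subtracting the shift again gives `v ∈ ℤ(A ∩ τ)`.
-/

open Set Submodule

theorem exists_nsmul_sum_add_mem_hull {R M ι : Type*} [Field R] [LinearOrder R]
    [IsStrictOrderedRing R] [Archimedean R] [AddCommGroup M] [Module R M] [Fintype ι]
    {v : ι → M} {x : M} (hx : x ∈ span R (range v)) :
    ∃ N : ℕ, x + N • ∑ i, v i ∈ PointedCone.hull R (range v) := by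
  obtain ⟨c, rfl⟩ := (mem_span_range_iff_exists_fun R).mp hx
  obtain ⟨B, hB⟩ := (Set.finite_range fun i => -c i).bddAbove
  obtain ⟨N, hN⟩ := exists_nat_ge B
  refine ⟨N, ?_⟩
  have hsum : ∑ i, c i • v i + N • ∑ i, v i = ∑ i, (c i + N) • v i := by
    simp only [Finset.smul_sum, ← Finset.sum_add_distrib, add_smul, Nat.cast_smul_eq_nsmul]
  rw [hsum]
  refine sum_mem fun i _ => PointedCone.smul_mem _ ?_ (PointedCone.subset_hull ⟨i, rfl⟩)
  have := (hB (mem_range_self i)).trans hN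
  linarith

theorem AddSubmonoid.mem_closure_sep_of_map_eq_zero {M N : Type*} [AddCommMonoid M]
    [AddCommMonoid N] [PartialOrder N] [IsOrderedAddMonoid N] (φ : M →+ N) {s : Set M}
    (hs : ∀ y ∈ s, 0 ≤ φ y) {x : M} (hx : x ∈ closure s) (hφx : φ x = 0) :
    x ∈ closure {y ∈ s | φ y = 0} := by
  -- carrying `0 ≤ φ x` is what lets a vanishing sum split into vanishing summands
  suffices ∀ x ∈ closure s, 0 ≤ φ x ∧ (φ x = 0 → x ∈ closure {y ∈ s | φ y = 0}) by
    exact (this x hx).2 hφx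
  intro x hx
  induction hx using closure_induction with
  | mem y hy => exact ⟨hs y hy, fun h => subset_closure ⟨hy, h⟩⟩
  | zero => exact ⟨by simp, fun _ => zero_mem _⟩
  | add y z _ _ hy hz =>
    refine ⟨by simpa using add_nonneg hy.1 hz.1, fun h => ?_⟩
    rw [map_add, add_eq_zero_iff_of_nonneg hy.1 hz.1] at h
    exact add_mem (hy.2 h.1) (hz.2 h.2)

theorem coneQ_eq_hull {d n : ℕ} (a : Fin n → Fin d → ℤ) :
    coneQ a = PointedCone.hull ℚ (range (aQ a)) := by
  ext x
  simp only [coneQ, SetLike.mem_coe, mem_span_range_iff_exists_fun]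
  constructor
  · rintro ⟨c, hc, rfl⟩
    exact ⟨fun j => ⟨c j, hc j⟩, rfl⟩
  · rintro ⟨c, rfl⟩
    exact ⟨fun j => c j, fun j => (c j).2, rfl⟩

theorem mem_Zint_of_mem_NAint_of_mem_span {d n : ℕ} {a : Fin n → Fin d → ℤ}
    {τ : Set (Fin n)} (hτ : IsFace a τ) {w : Fin d → ℤ} (hw : w ∈ NAint a)
    (hspan : castQVec w ∈ span ℚ (aQ a '' τ)) : w ∈ Zint a τ := by
  obtain ⟨F, hF0, rfl⟩ := hτ
  let φ : (Fin d → ℤ) →+ ℚ := F.toAddMonoidHom.comp (castQhom d)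
  have hFspan : F (castQVec w) = 0 :=
    span_le.mpr (by rintro _ ⟨j, hj, rfl⟩; exact LinearMap.mem_ker.mpr hj) hspan
  have hsep : {y ∈ range a | φ y = 0} ⊆ a '' {j | F (aQ a j) = 0} := by
    rintro _ ⟨⟨j, rfl⟩, hj⟩
    exact ⟨j, hj, rfl⟩
  have hw' := AddSubmonoid.mem_closure_sep_of_map_eq_zero φ
    (by rintro _ ⟨j, rfl⟩; exact hF0 j) hw hFspan
  exact AddSubmonoid.closure_le.mpr (hsep.trans AddSubgroup.subset_closure) hw'

/-- If `ℕA` is normal then for every face `τ`,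
`(ℚ(A∩τ)) ∩ ℤA = ℤ(A∩τ)`. -/
theorem stmt9 {d n : ℕ} (a : Fin n → Fin d → ℤ) (hnorm : IsNormal a)
    (τ : Set (Fin n)) (hτ : IsFace a τ) :
    ∀ v : Fin d → ℤ, v ∈ Zint a Set.univ →
      castQVec v ∈ Submodule.span ℚ (aQ a '' τ) → v ∈ Zint a τ := by
  classical
  intro v hv hvspan
  rw [image_eq_range] at hvspan
  obtain ⟨N, hN⟩ := exists_nsmul_sum_add_mem_hull hvspan
  set s : Fin d → ℤ := ∑ j : τ, a j
  have hs : s ∈ Zint a τ :=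
    sum_mem fun j _ => AddSubgroup.subset_closure (mem_image_of_mem a j.2)
  have hcast : castQVec (v + N • s) = castQVec v + N • ∑ j : τ, aQ a j := by
    funext i; simp [castQVec, aQ, s]
  have hw : v + N • s ∈ NAint a := by
    have hs' : s ∈ Zint a univ := AddSubgroup.closure_mono (image_mono (subset_univ τ)) hs
    refine hnorm _ (add_mem hv (nsmul_mem hs' N)) ?_
    rw [coneQ_eq_hull, hcast]
    exact span_mono (range_comp_subset_range _ _) hN
  have hwspan : castQVec (v + N • s) ∈ span ℚ (aQ a '' τ) := by
    rw [hcast, image_eq_range]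
    exact PointedCone.hull_le_span ℚ _ hN
  simpa using sub_mem (mem_Zint_of_mem_NAint_of_mem_span hτ hw hwspan) (nsmul_mem hs N)
end

section
/- In the monomial curve case (d = 2, columns a_j = (1, i_j) with 0 = i_1 < i_2 < ... < i_n coprime), the set of holes ℰ(A) := ((ℕA + ℤa_1) ∩ (ℕA + ℤa_n)) \ ℕA equals {β ∈ ℤ^2 : F_{σ_1}(β) ∈ F_{σ_1}(ℕA) and F_{σ_2}(β) ∈ F_{σ_2}(ℕA)} \ ℕA, where F_{σ_1}(s) = s_2 and F_{σ_2}(s) = i_n s_1 - s_2. -/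
open scoped BigOperators

/-
Since `a 0 = (1, 0)` and `a n = (1, i n)`, the lattice lines `ℤ a 0` and `ℤ a n` are exactly the
kernels of `F_{σ_1}(s) = s_2` and `F_{σ_2}(s) = i_n s_1 - s_2`. For a form `F` with kernel `ℤ w`,
a point `β` lies in `ℕA + ℤ w` if and only if `F β` is a value of `F` on `ℕA`.
-/

theorem AddMonoidHom.exists_add_zsmul_iff_of_ker_eq_zmultiples {G H : Type*} [AddCommGroup G]
    [AddCommGroup H] {F : G →+ H} {w : G} (hker : F.ker = AddSubgroup.zmultiples w)
    (S : Set G) (v : G) :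
    (∃ m ∈ S, ∃ z : ℤ, v = m + z • w) ↔ ∃ m ∈ S, F v = F m := by
  have hw : F w = 0 := by
    rw [← AddMonoidHom.mem_ker, hker]
    exact AddSubgroup.mem_zmultiples w
  constructor
  · rintro ⟨m, hm, z, rfl⟩
    exact ⟨m, hm, by simp [hw]⟩
  · rintro ⟨m, hm, hFv⟩
    have hvm : v - m ∈ AddSubgroup.zmultiples w := by
      rw [← hker, AddMonoidHom.mem_ker, map_sub, hFv, sub_self]
    obtain ⟨z, hz⟩ := AddSubgroup.mem_zmultiples_iff.mp hvm
    exact ⟨m, hm, z, by rw [hz, add_sub_cancel]⟩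

-- `slopeForm (i n)` is `F_{σ_2}`, and `slopeForm 0 = -F_{σ_1}`.
def slopeForm (c : ℤ) : (Fin 2 → ℤ) →+ ℤ :=
  c • Pi.evalAddMonoidHom (fun _ => ℤ) 0 - Pi.evalAddMonoidHom (fun _ => ℤ) 1

@[simp]
theorem slopeForm_apply (c : ℤ) (v : Fin 2 → ℤ) : slopeForm c v = c * v 0 - v 1 := rfl

theorem ker_slopeForm (c : ℤ) : (slopeForm c).ker = AddSubgroup.zmultiples ![1, c] := by
  ext v
  rw [AddMonoidHom.mem_ker, slopeForm_apply, AddSubgroup.mem_zmultiples_iff]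
  constructor
  · intro hv
    refine ⟨v 0, funext fun k => ?_⟩
    fin_cases k
    · simp
    · simp [← sub_eq_zero.mp hv, mul_comm]
  · rintro ⟨z, rfl⟩
    simp [mul_comm]

theorem stmt14_general (n : ℕ) (i : Fin (n + 1) → ℤ) (h0 : i 0 = 0) :
    let a : Fin (n + 1) → Fin 2 → ℤ := fun j => ![1, i j]
    ({v | ∃ m ∈ NAint a, ∃ z : ℤ, v = m + z • a 0} ∩
        {v | ∃ m ∈ NAint a, ∃ z : ℤ, v = m + z • a (Fin.last n)}) \ (NAint a : Set _) =
      {v : Fin 2 → ℤ | (∃ m ∈ NAint a, v 1 = m 1) ∧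
          (∃ m ∈ NAint a,
            i (Fin.last n) * v 0 - v 1 = i (Fin.last n) * m 0 - m 1)} \ (NAint a : Set _) := by
  intro a
  congr 1
  ext v
  have hσ₁ := AddMonoidHom.exists_add_zsmul_iff_of_ker_eq_zmultiples (ker_slopeForm 0)
    (NAint a) v
  have hσ₂ := AddMonoidHom.exists_add_zsmul_iff_of_ker_eq_zmultiples
    (ker_slopeForm (i (Fin.last n))) (NAint a) v
  have ha₀ : a 0 = ![1, 0] := by simp [a, h0]
  simp only [SetLike.mem_coe, slopeForm_apply, zero_mul, zero_sub, neg_inj] at hσ₁ hσ₂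
  exact and_congr (ha₀ ▸ hσ₁) hσ₂

/-- Monomial curve case: the set of holes
`ℰ(A) = ((ℕA + ℤa_1) ∩ (ℕA + ℤa_n)) \ ℕA` equals
`{β ∈ ℤ² : F_{σ_1}(β) ∈ F_{σ_1}(ℕA), F_{σ_2}(β) ∈ F_{σ_2}(ℕA)} \ ℕA`, where
`F_{σ_1}(s) = s_2` and `F_{σ_2}(s) = i_n s_1 - s_2`. -/
theorem stmt14 (n : ℕ) (i : Fin (n + 1) → ℤ) (h0 : i 0 = 0) (hmono : StrictMono i)
    (hcop : ∃ u : Fin (n + 1) → ℤ, ∑ j, u j * i j = 1) :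
    let a : Fin (n + 1) → Fin 2 → ℤ := fun j => ![1, i j]
    ({v | ∃ m ∈ NAint a, ∃ z : ℤ, v = m + z • a 0} ∩
        {v | ∃ m ∈ NAint a, ∃ z : ℤ, v = m + z • a (Fin.last n)}) \ (NAint a : Set _) =
      {v : Fin 2 → ℤ | (∃ m ∈ NAint a, v 1 = m 1) ∧
          (∃ m ∈ NAint a,
            i (Fin.last n) * v 0 - v 1 = i (Fin.last n) * m 0 - m 1)} \ (NAint a : Set _) :=
  stmt14_general n i h0
end
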